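/- Loosened one-shot multiple description bound: Under the setup of the one-shot multiple description theorem (source pmf q_S, conditional pmf q_{U₀U₁U₂|S}, reconstruction functions ŝ₀, ŝ₁, ŝ₂, distortion measures d₀, d₁, d₂ and levels D₀, D₁, D₂, positive integers M₁, M₂ and a common divisor J₀ of M₁ and M₂, with joint pmf q(s,u₀,u₁,u₂) = q(s)q(u₀,u₁,u₂|s)), for every γ > 0 there exists an (M₁,M₂)-code whose probability of excess distortion satisfies P[ d₀(S,Ŝ₀) > D₀ or d₁(S,Ŝ₁) > D₁ or d₂(S,Ŝ₂) > D₂ ] ≤ P_q[ d₀(S, ŝ₀(U₀,U₁,U₂)) > D₀, or d₁(S, ŝ₁(U₀,U₁)) > D₁, or d₂(S, ŝ₂(U₀,U₂)) > D₂, or log J₀ − i_q(S;U₀) < γ, or log M₁ − i_q(S;U₀U₁) < γ, or log M₂ − i_q(S;U₀U₂) < γ, or log( M₁M₂/J₀ ) − i_q(S;U₀U₁U₂) − i_q(U₁;U₂|U₀) < γ ] + 4·2^{−γ}. -/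

import Mathlib

open scoped BigOperators

/-- A pmf on a finite type, represented by a nonnegative real-valued function summing to 1. -/
structure FinPMF (α : Type) [Fintype α] where
  p : α → ℝ
  nonneg : ∀ a, 0 ≤ p a
  sum_eq_one : ∑ a, p a = 1

open Classical in
/-- Indicator of a proposition, as a real number. -/
noncomputable def ind (P : Prop) : ℝ := if P then 1 else 0

variable {S U0 U1 U2 R0 R1 R2 : Type}
  [Fintype S] [Fintype U0] [Fintype U1] [Fintype U2]
  [Fintype R0] [Fintype R1] [Fintype R2]

/-- The joint pmf `q(s,u₀,u₁,u₂) = q(s) q(u₀,u₁,u₂|s)`. -/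
noncomputable def qMD (qS : FinPMF S) (qU : S → FinPMF (U0 × U1 × U2))
    (s : S) (u0 : U0) (u1 : U1) (u2 : U2) : ℝ :=
  qS.p s * (qU s).p (u0, u1, u2)

noncomputable def mSU0 (qS : FinPMF S) (qU : S → FinPMF (U0 × U1 × U2))
    (s : S) (u0 : U0) : ℝ :=
  ∑ u1 : U1, ∑ u2 : U2, qMD qS qU s u0 u1 u2

noncomputable def mU0 (qS : FinPMF S) (qU : S → FinPMF (U0 × U1 × U2)) (u0 : U0) : ℝ :=
  ∑ s : S, mSU0 qS qU s u0

noncomputable def mSU01 (qS : FinPMF S) (qU : S → FinPMF (U0 × U1 × U2))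
    (s : S) (u0 : U0) (u1 : U1) : ℝ :=
  ∑ u2 : U2, qMD qS qU s u0 u1 u2

noncomputable def mU01 (qS : FinPMF S) (qU : S → FinPMF (U0 × U1 × U2))
    (u0 : U0) (u1 : U1) : ℝ :=
  ∑ s : S, mSU01 qS qU s u0 u1

noncomputable def mSU02 (qS : FinPMF S) (qU : S → FinPMF (U0 × U1 × U2))
    (s : S) (u0 : U0) (u2 : U2) : ℝ :=
  ∑ u1 : U1, qMD qS qU s u0 u1 u2

noncomputable def mU02 (qS : FinPMF S) (qU : S → FinPMF (U0 × U1 × U2))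
    (u0 : U0) (u2 : U2) : ℝ :=
  ∑ s : S, mSU02 qS qU s u0 u2

noncomputable def mU012 (qS : FinPMF S) (qU : S → FinPMF (U0 × U1 × U2))
    (u0 : U0) (u1 : U1) (u2 : U2) : ℝ :=
  ∑ s : S, qMD qS qU s u0 u1 u2

/-- Information density `i_q(S;U₀)`. -/
noncomputable def iSU0 (qS : FinPMF S) (qU : S → FinPMF (U0 × U1 × U2))
    (s : S) (u0 : U0) : ℝ :=
  Real.logb 2 (mSU0 qS qU s u0 / (qS.p s * mU0 qS qU u0))

/-- Information density `i_q(S;U₀U₁)`, treating `(U₀,U₁)` as a single variable. -/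
noncomputable def iSU01 (qS : FinPMF S) (qU : S → FinPMF (U0 × U1 × U2))
    (s : S) (u0 : U0) (u1 : U1) : ℝ :=
  Real.logb 2 (mSU01 qS qU s u0 u1 / (qS.p s * mU01 qS qU u0 u1))

/-- Information density `i_q(S;U₀U₂)`, treating `(U₀,U₂)` as a single variable. -/
noncomputable def iSU02 (qS : FinPMF S) (qU : S → FinPMF (U0 × U1 × U2))
    (s : S) (u0 : U0) (u2 : U2) : ℝ :=
  Real.logb 2 (mSU02 qS qU s u0 u2 / (qS.p s * mU02 qS qU u0 u2))

/-- Information density `i_q(S;U₀U₁U₂)`, treating `(U₀,U₁,U₂)` as a single variable. -/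
noncomputable def iSU012 (qS : FinPMF S) (qU : S → FinPMF (U0 × U1 × U2))
    (s : S) (u0 : U0) (u1 : U1) (u2 : U2) : ℝ :=
  Real.logb 2 (qMD qS qU s u0 u1 u2 / (qS.p s * mU012 qS qU u0 u1 u2))

/-- Conditional information density `i_q(U₁;U₂|U₀)`. -/
noncomputable def iU1U2cU0 (qS : FinPMF S) (qU : S → FinPMF (U0 × U1 × U2))
    (u0 : U0) (u1 : U1) (u2 : U2) : ℝ :=
  Real.logb 2 (mU012 qS qU u0 u1 u2 * mU0 qS qU u0 /
    (mU01 qS qU u0 u1 * mU02 qS qU u0 u2))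

/-- Probability of excess distortion of an `(M₁,M₂)`-code for multiple description
coding. -/
noncomputable def pExcessMD (M1 M2 : ℕ) (qS : FinPMF S)
    (d0 : S → R0 → ℝ) (d1 : S → R1 → ℝ) (d2 : S → R2 → ℝ) (D0 D1 D2 : ℝ)
    (enc : S → FinPMF (Fin M1 × Fin M2)) (dec0 : Fin M1 × Fin M2 → FinPMF R0)
    (dec1 : Fin M1 → FinPMF R1) (dec2 : Fin M2 → FinPMF R2) : ℝ :=
  ∑ s : S, ∑ m : Fin M1 × Fin M2, ∑ r0 : R0, ∑ r1 : R1, ∑ r2 : R2,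
    qS.p s * (enc s).p m * (dec0 m).p r0 * (dec1 m.1).p r1 * (dec2 m.2).p r2 *
      ind (D0 < d0 s r0 ∨ D1 < d1 s r1 ∨ D2 < d2 s r2)

/-!
Random superposition coding. Draw `J₀` independent clouds, each a centre `u₀ ∼ q(u₀)` with
`N₁ = M₁ / J₀` satellites `u₁ ∼ q(u₁|u₀)` and `N₂ = M₂ / J₀` satellites `u₂ ∼ q(u₂|u₀)`. The
first description carries a cloud index and a `u₁`-satellite index, the second the same cloud
index and a `u₂`-satellite index. Given `s`, the encoder picks a triple of one cloud that has
positive probability and lies outside the event `𝓔` of the theorem, and the decoders apply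
`ŝ₀, ŝ₁, ŝ₂`; so the code can fail only when the codebook contains no such triple.

Outside `𝓔` the four information-density conditions bound `q` by products of its marginals.
The second-moment method (a one-shot mutual covering lemma) then shows that one cloud contains a
good triple with probability `φ ≥ w / (4 J₀ 2^(-γ))`, where `w` is the conditional mass outside
`𝓔` given `s`, and all `J₀` clouds miss with probability
`(1 - φ)^J₀ ≤ exp (-w / (4 · 2^(-γ))) ≤ 1 - w + 4 · 2^(-γ)` by convexity of `exp`. Averaging over
the codebook, some codebook does at least as well as the average.
-/

lemma ind_pos {P : Prop} (h : P) : ind P = 1 := by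
  classical
  exact if_pos h

lemma ind_neg {P : Prop} (h : ¬P) : ind P = 0 := by
  classical
  exact if_neg h

lemma ind_nonneg (P : Prop) : 0 ≤ ind P := by
  classical
  by_cases h : P <;> simp [ind_pos, ind_neg, h]

lemma ind_le_one (P : Prop) : ind P ≤ 1 := by
  classical
  by_cases h : P <;> simp [ind_pos, ind_neg, h]

lemma ind_mono {P Q : Prop} (h : P → Q) : ind P ≤ ind Q := by
  classical
  by_cases hP : P
  · rw [ind_pos hP, ind_pos (h hP)]
  · rw [ind_neg hP]
    exact ind_nonneg Q

lemma mul_ind_le {a B : ℝ} (hB : 0 ≤ B) : a * ind (a ≤ B) ≤ B := by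
  classical
  by_cases h : a ≤ B
  · rwa [ind_pos h, mul_one]
  · rwa [ind_neg h, mul_zero]

lemma ind_not (P : Prop) : ind (¬P) = 1 - ind P := by
  classical
  by_cases h : P <;> simp [ind_pos, ind_neg, h]

lemma ind_forall {ι : Type} [Fintype ι] (P : ι → Prop) : ind (∀ i, P i) = ∏ i, ind (P i) := by
  classical
  by_cases h : ∀ i, P i
  · rw [ind_pos h, Finset.prod_eq_one fun i _ => ind_pos (h i)]
  · obtain ⟨i, hi⟩ := not_forall.mp h
    rw [ind_neg h, Finset.prod_eq_zero (Finset.mem_univ i) (ind_neg hi)]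

namespace FinPMF

variable {α β : Type} [Fintype α] [Fintype β]

lemma nonempty (μ : FinPMF α) : Nonempty α := by
  by_contra h
  have := μ.sum_eq_one
  simp [not_nonempty_iff.mp h] at this

def expect (μ : FinPMF α) (f : α → ℝ) : ℝ := ∑ a, μ.p a * f a

section Expect

variable (μ : FinPMF α) {f g : α → ℝ}

lemma expect_const (c : ℝ) : μ.expect (fun _ => c) = c := by
  simp [expect, ← Finset.sum_mul, μ.sum_eq_one]

lemma expect_mono (h : ∀ a, f a ≤ g a) : μ.expect f ≤ μ.expect g :=
  Finset.sum_le_sum fun a _ => mul_le_mul_of_nonneg_left (h a) (μ.nonneg a)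

lemma expect_nonneg (h : ∀ a, 0 ≤ f a) : 0 ≤ μ.expect f :=
  Finset.sum_nonneg fun a _ => mul_nonneg (μ.nonneg a) (h a)

lemma expect_add : μ.expect (fun a => f a + g a) = μ.expect f + μ.expect g := by
  simp [expect, mul_add, Finset.sum_add_distrib]

lemma expect_sub : μ.expect (fun a => f a - g a) = μ.expect f - μ.expect g := by
  simp [expect, mul_sub, Finset.sum_sub_distrib]

lemma expect_const_mul (c : ℝ) : μ.expect (fun a => c * f a) = c * μ.expect f := by
  simp [expect, Finset.mul_sum, mul_left_comm]

lemma expect_sum {ι : Type} (s : Finset ι) (F : ι → α → ℝ) :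
    μ.expect (fun a => ∑ i ∈ s, F i a) = ∑ i ∈ s, μ.expect (F i) := by
  simp only [expect, Finset.mul_sum]
  exact Finset.sum_comm

lemma expect_comm (ν : FinPMF β) (F : α → β → ℝ) :
    μ.expect (fun a => ν.expect (F a)) = ν.expect (fun b => μ.expect (F · b)) := by
  simp only [expect, Finset.mul_sum]
  rw [Finset.sum_comm]
  simp only [mul_left_comm]

lemma exists_le_expect (f : α → ℝ) : ∃ a, f a ≤ μ.expect f := by
  by_contra! h
  obtain ⟨a, -, ha⟩ := Finset.exists_ne_zero_of_sum_ne_zero (μ.sum_eq_one.symm ▸ one_ne_zero)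
  have : μ.expect (fun _ => μ.expect f) < μ.expect f :=
    Finset.sum_lt_sum (fun b _ => mul_le_mul_of_nonneg_left (h b).le (μ.nonneg b))
      ⟨a, Finset.mem_univ a, mul_lt_mul_of_pos_left (h a) ((μ.nonneg a).lt_of_ne' ha)⟩
  rw [expect_const] at this
  exact lt_irrefl _ this

lemma sq_expect_le_expect_ind_mul {P : α → Prop} (hf : ∀ a, ¬P a → f a = 0) :
    μ.expect f ^ 2 ≤ μ.expect (fun a => ind (P a)) * μ.expect (fun a => f a ^ 2) := by
  refine Finset.sum_sq_le_sum_mul_sum_of_sq_le_mul _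
    (fun a _ => mul_nonneg (μ.nonneg a) (ind_nonneg _))
    (fun a _ => mul_nonneg (μ.nonneg a) (sq_nonneg _)) fun a _ => le_of_eq ?_
  classical
  by_cases h : P a
  · simp only [ind_pos h]; ring
  · simp [ind_neg h, hf a h]

lemma expect_sq_le_mul_expect {r : α → ℝ} {C : ℝ} (hr : ∀ a, 0 ≤ r a)
    (hC : ∀ a, 0 < μ.p a → r a ≤ C) : μ.expect (fun a => r a ^ 2) ≤ C * μ.expect r := by
  rw [← expect_const_mul]
  refine Finset.sum_le_sum fun a _ => ?_
  rcases (μ.nonneg a).eq_or_lt with h | h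
  · simp [← h]
  · simp only [sq]
    exact mul_le_mul_of_nonneg_left (mul_le_mul_of_nonneg_right (hC a h) (hr a)) h.le

lemma expect_ind_le_one (P : α → Prop) :
    μ.expect (fun a => ind (P a)) ≤ 1 :=
  (μ.expect_mono fun a => ind_le_one (P a)).trans_eq (μ.expect_const 1)

end Expect

open Classical in
noncomputable def dirac (a : α) : FinPMF α :=
  ⟨fun b => if b = a then 1 else 0, fun b => by split_ifs <;> norm_num, by simp⟩

def compProd (μ : FinPMF α) (κ : α → FinPMF β) : FinPMF (α × β) :=
  ⟨fun x => μ.p x.1 * (κ x.1).p x.2, fun x => mul_nonneg (μ.nonneg _) ((κ _).nonneg _), by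
    simp [Fintype.sum_prod_type, ← Finset.mul_sum, (κ _).sum_eq_one, μ.sum_eq_one]⟩

lemma expect_compProd (μ : FinPMF α) (κ : α → FinPMF β) (f : α × β → ℝ) :
    (μ.compProd κ).expect f = μ.expect fun a => (κ a).expect fun b => f (a, b) := by
  simp [expect, compProd, Fintype.sum_prod_type, Finset.mul_sum, mul_assoc]

def prod (μ : FinPMF α) (ν : FinPMF β) : FinPMF (α × β) := μ.compProd fun _ => ν

lemma expect_prod (μ : FinPMF α) (ν : FinPMF β) (f : α × β → ℝ) :
    (μ.prod ν).expect f = μ.expect fun a => ν.expect fun b => f (a, b) :=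
  expect_compProd μ _ f

def pi (μ : FinPMF α) (n : ℕ) : FinPMF (Fin n → α) :=
  ⟨fun f => ∏ i, μ.p (f i), fun f => Finset.prod_nonneg fun i _ => μ.nonneg _, by
    classical
    rw [← Fintype.prod_sum (fun (_ : Fin n) a => μ.p a)]
    simp [μ.sum_eq_one]⟩

section Pi

variable (μ : FinPMF α) {n : ℕ}

lemma expect_pi_prod (g : Fin n → α → ℝ) :
    (μ.pi n).expect (fun f => ∏ i, g i (f i)) = ∏ i, μ.expect (g i) := by
  classical
  simp only [expect, pi, ← Finset.prod_mul_distrib]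
  exact (Fintype.prod_sum fun i a => μ.p a * g i a).symm

lemma expect_pi_apply (k : Fin n) (F : α → ℝ) :
    (μ.pi n).expect (fun f => F (f k)) = μ.expect F := by
  classical
  have h := μ.expect_pi_prod fun i => if i = k then F else fun _ => 1
  rw [Finset.prod_eq_single k (fun i _ hi => by simp [hi, expect_const]) (by simp), if_pos rfl]
    at h
  rw [← h]
  congr 1 with f
  rw [Finset.prod_eq_single k (fun i _ hi => by simp [hi]) (by simp), if_pos rfl]

lemma expect_pi_apply_mul_apply {k k' : Fin n} (hk : k ≠ k') (F G : α → ℝ) :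
    (μ.pi n).expect (fun f => F (f k) * G (f k')) = μ.expect F * μ.expect G := by
  classical
  have h := μ.expect_pi_prod fun i => if i = k then F else if i = k' then G else fun _ => 1
  rw [Finset.prod_eq_mul k k' hk (fun i _ hi => by simp [hi, expect_const]) (by simp) (by simp),
    if_pos rfl, if_neg hk.symm, if_pos rfl] at h
  rw [← h]
  congr 1 with f
  rw [Finset.prod_eq_mul k k' hk (fun i _ hi => by simp [hi]) (by simp) (by simp),
    if_pos rfl, if_neg hk.symm, if_pos rfl]

/-- The `n (n - 1)` off-diagonal terms are counted as `n ^ 2`. -/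
lemma expect_pi_sum_sq_le (F : α → ℝ) :
    (μ.pi n).expect (fun f => (∑ i, F (f i)) ^ 2) ≤
      n * μ.expect (fun a => F a ^ 2) + n ^ 2 * μ.expect F ^ 2 := by
  classical
  have hterm : ∀ i j : Fin n, (μ.pi n).expect (fun f => F (f i) * F (f j)) ≤
      (if i = j then μ.expect (fun a => F a ^ 2) else 0) + μ.expect F ^ 2 := by
    intro i j
    rcases eq_or_ne i j with rfl | hij
    · rw [if_pos rfl, ← expect_pi_apply μ i (fun a => F a ^ 2)]
      simp only [sq]
      linarith [mul_self_nonneg (μ.expect F)]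
    · rw [expect_pi_apply_mul_apply μ hij, if_neg hij, zero_add, sq]
  calc (μ.pi n).expect (fun f => (∑ i, F (f i)) ^ 2)
      = ∑ i, ∑ j, (μ.pi n).expect (fun f => F (f i) * F (f j)) := by
        simp only [sq, Finset.sum_mul_sum, expect_sum]
    _ ≤ ∑ i : Fin n, ∑ j : Fin n,
          ((if i = j then μ.expect (fun a => F a ^ 2) else 0) + μ.expect F ^ 2) :=
        Finset.sum_le_sum fun i _ => Finset.sum_le_sum fun j _ => hterm i j
    _ = _ := by
        simp only [Finset.sum_add_distrib, Finset.sum_ite_eq, Finset.mem_univ, if_true,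
          Finset.sum_const, Finset.card_univ, Fintype.card_fin, nsmul_eq_mul]
        ring

lemma expect_pi_forall_not (P : α → Prop) :
    (μ.pi n).expect (fun f => ind (∀ i, ¬P (f i))) = (1 - μ.expect (fun a => ind (P a))) ^ n := by
  simp only [ind_forall, ind_not]
  rw [expect_pi_prod μ fun _ a => 1 - ind (P a)]
  simp [expect_sub, expect_const]

end Pi

open Classical in
/-- `w` rescaled to a pmf; an arbitrary point mass if `w = 0`. -/
noncomputable def normalize [Nonempty α] (w : α → ℝ)
    (hw : ∀ a, 0 ≤ w a) : FinPMF α :=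
  if h : ∑ a, w a = 0 then dirac (Classical.arbitrary α)
  else ⟨fun a => w a / ∑ b, w b, fun a => div_nonneg (hw a) (Finset.sum_nonneg fun b _ => hw b),
    by rw [← Finset.sum_div, div_self h]⟩

lemma sum_mul_normalize [Nonempty α] {w : α → ℝ}
    (hw : ∀ a, 0 ≤ w a) (a : α) : (∑ b, w b) * (normalize w hw).p a = w a := by
  by_cases h : ∑ b, w b = 0
  · rw [h, zero_mul, (Finset.sum_eq_zero_iff_of_nonneg fun b _ => hw b).1 h a (Finset.mem_univ a)]
  · simp only [normalize, h, dite_false]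
    exact mul_div_cancel₀ _ h

end FinPMF

section MutualCovering

open FinPMF

variable {V1 V2 : Type} [Fintype V1] [Fintype V2] (μ1 : FinPMF V1) (μ2 : FinPMF V2) {n1 n2 : ℕ}

lemma expect_sum_sum (ρ : V1 → V2 → ℝ) :
    ((μ1.pi n1).prod (μ2.pi n2)).expect (fun σ => ∑ k, ∑ l, ρ (σ.1 k) (σ.2 l)) =
      n1 * n2 * μ1.expect (fun x => μ2.expect (ρ x)) := by
  simp only [expect_prod, expect_sum, expect_pi_apply μ2 _ (ρ _), Finset.sum_const,
    Finset.card_univ, Fintype.card_fin, nsmul_eq_mul,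
    expect_pi_apply μ1 _ (fun x => μ2.expect (ρ x))]
  ring

lemma expect_sum_sum_sq_le (ρ : V1 → V2 → ℝ) :
    ((μ1.pi n1).prod (μ2.pi n2)).expect (fun σ => (∑ k, ∑ l, ρ (σ.1 k) (σ.2 l)) ^ 2) ≤
      n1 * n2 * μ1.expect (fun x => μ2.expect (fun y => ρ x y ^ 2)) +
      n1 * n2 ^ 2 * μ1.expect (fun x => μ2.expect (ρ x) ^ 2) +
      n1 ^ 2 * n2 * μ2.expect (fun y => μ1.expect (ρ · y) ^ 2) +
      n1 ^ 2 * n2 ^ 2 * μ1.expect (fun x => μ2.expect (ρ x)) ^ 2 := by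
  calc ((μ1.pi n1).prod (μ2.pi n2)).expect (fun σ => (∑ k, ∑ l, ρ (σ.1 k) (σ.2 l)) ^ 2)
      = (μ1.pi n1).expect (fun xs => (μ2.pi n2).expect
          (fun ys => (∑ l, ∑ k, ρ (xs k) (ys l)) ^ 2)) := by
        rw [expect_prod]
        simp only [Finset.sum_comm (γ := Fin n1)]
    _ ≤ (μ1.pi n1).expect (fun xs => n2 * μ2.expect (fun y => (∑ k, ρ (xs k) y) ^ 2) +
          n2 ^ 2 * (∑ k, μ2.expect (ρ (xs k))) ^ 2) := by
        refine expect_mono _ fun xs => ?_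
        rw [← expect_sum]
        exact expect_pi_sum_sq_le μ2 (fun y => ∑ k, ρ (xs k) y)
    _ = n2 * μ2.expect (fun y => (μ1.pi n1).expect (fun xs => (∑ k, ρ (xs k) y) ^ 2)) +
          n2 ^ 2 * (μ1.pi n1).expect (fun xs => (∑ k, μ2.expect (ρ (xs k))) ^ 2) := by
        rw [expect_add, expect_const_mul, expect_const_mul, expect_comm]
    _ ≤ n2 * μ2.expect (fun y => n1 * μ1.expect (fun x => ρ x y ^ 2) +
            n1 ^ 2 * μ1.expect (ρ · y) ^ 2) +
          n2 ^ 2 * (n1 * μ1.expect (fun x => μ2.expect (ρ x) ^ 2) +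
            n1 ^ 2 * μ1.expect (fun x => μ2.expect (ρ x)) ^ 2) := by
        gcongr
        · exact expect_mono _ fun y => expect_pi_sum_sq_le μ1 (ρ · y)
        · exact expect_pi_sum_sq_le μ1 (fun x => μ2.expect (ρ x))
    _ = _ := by
        rw [expect_add, expect_const_mul, expect_const_mul, expect_comm μ2 μ1]
        ring

variable {w : V1 → V2 → ℝ} {A : ℝ}

noncomputable def likelihoodRatio (w : V1 → V2 → ℝ) (x : V1) (y : V2) : ℝ :=
  w x y / (μ1.p x * μ2.p y)

lemma mul_likelihoodRatio (hw : ∀ x y, 0 ≤ w x y)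
    (hpair : ∀ x y, w x y ≤ A * n1 * n2 * (μ1.p x * μ2.p y)) (x : V1) (y : V2) :
    μ1.p x * μ2.p y * likelihoodRatio μ1 μ2 w x y = w x y :=
  (mul_comm _ _).trans <| div_mul_cancel_of_imp fun h =>
    le_antisymm (by simpa [h] using hpair x y) (hw x y)

lemma mul_expect_likelihoodRatio (hw : ∀ x y, 0 ≤ w x y)
    (hpair : ∀ x y, w x y ≤ A * n1 * n2 * (μ1.p x * μ2.p y)) (x : V1) :
    μ1.p x * μ2.expect (likelihoodRatio μ1 μ2 w x) = ∑ y, w x y := by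
  simp only [expect, Finset.mul_sum, ← mul_assoc, mul_likelihoodRatio μ1 μ2 hw hpair]

lemma mul_expect_likelihoodRatio' (hw : ∀ x y, 0 ≤ w x y)
    (hpair : ∀ x y, w x y ≤ A * n1 * n2 * (μ1.p x * μ2.p y)) (y : V2) :
    μ2.p y * μ1.expect (likelihoodRatio μ1 μ2 w · y) = ∑ x, w x y := by
  simp only [expect, Finset.mul_sum, ← mul_likelihoodRatio μ1 μ2 hw hpair _ y]
  exact Finset.sum_congr rfl fun x _ => by ring

lemma expect_expect_likelihoodRatio (hw : ∀ x y, 0 ≤ w x y)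
    (hpair : ∀ x y, w x y ≤ A * n1 * n2 * (μ1.p x * μ2.p y)) :
    μ1.expect (fun x => μ2.expect (likelihoodRatio μ1 μ2 w x)) = ∑ x, ∑ y, w x y :=
  Finset.sum_congr rfl fun x _ => mul_expect_likelihoodRatio μ1 μ2 hw hpair x

/-- Each of the four terms of `expect_sum_sum_sq_le` is at most `A n₁² n₂² ∑ w`. -/
lemma expect_sum_sum_likelihoodRatio_sq_le (hw : ∀ x y, 0 ≤ w x y)
    (hpair : ∀ x y, w x y ≤ A * n1 * n2 * (μ1.p x * μ2.p y))
    (hrow : ∀ x, ∑ y, w x y ≤ A * n1 * μ1.p x) (hcol : ∀ y, ∑ x, w x y ≤ A * n2 * μ2.p y)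
    (htot : ∑ x, ∑ y, w x y ≤ A) :
    ((μ1.pi n1).prod (μ2.pi n2)).expect
      (fun σ => (∑ k, ∑ l, likelihoodRatio μ1 μ2 w (σ.1 k) (σ.2 l)) ^ 2) ≤
        (n1 * n2) ^ 2 * (4 * A * ∑ x, ∑ y, w x y) := by
  set ψ := ∑ x, ∑ y, w x y
  set ρ := likelihoodRatio μ1 μ2 w
  have hρ0 : ∀ x y, 0 ≤ ρ x y := fun x y =>
    div_nonneg (hw x y) (mul_nonneg (μ1.nonneg x) (μ2.nonneg y))
  have hmean : μ1.expect (fun x => μ2.expect (ρ x)) = ψ :=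
    expect_expect_likelihoodRatio μ1 μ2 hw hpair
  have b1 : μ1.expect (fun x => μ2.expect (fun y => ρ x y ^ 2)) ≤ A * n1 * n2 * ψ := by
    have := (μ1.prod μ2).expect_sq_le_mul_expect (r := fun z => ρ z.1 z.2) (C := A * n1 * n2)
      (fun z => hρ0 _ _) fun z hz => (div_le_iff₀ hz).2 (hpair z.1 z.2)
    rwa [expect_prod, expect_prod, hmean] at this
  have b2 : μ1.expect (fun x => μ2.expect (ρ x) ^ 2) ≤ A * n1 * ψ := by
    rw [← hmean]
    refine μ1.expect_sq_le_mul_expect (fun x => expect_nonneg _ (hρ0 x)) fun x hx =>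
      le_of_mul_le_mul_left ?_ hx
    rw [mul_expect_likelihoodRatio μ1 μ2 hw hpair, mul_comm]
    exact hrow x
  have b3 : μ2.expect (fun y => μ1.expect (ρ · y) ^ 2) ≤ A * n2 * ψ := by
    rw [← hmean, expect_comm]
    refine μ2.expect_sq_le_mul_expect (fun y => expect_nonneg _ (hρ0 · y)) fun y hy =>
      le_of_mul_le_mul_left ?_ hy
    rw [mul_expect_likelihoodRatio' μ1 μ2 hw hpair, mul_comm]
    exact hcol y
  have b4 : ψ ^ 2 ≤ A * ψ := by
    rw [sq]
    exact mul_le_mul_of_nonneg_right htot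
      (Finset.sum_nonneg fun x _ => Finset.sum_nonneg fun y _ => hw x y)
  refine (expect_sum_sum_sq_le μ1 μ2 ρ).trans ?_
  rw [hmean]
  calc _ ≤ n1 * n2 * (A * n1 * n2 * ψ) + n1 * n2 ^ 2 * (A * n1 * ψ)
        + n1 ^ 2 * n2 * (A * n2 * ψ) + n1 ^ 2 * n2 ^ 2 * (A * ψ) := by gcongr
    _ = _ := by ring

/-- The one-shot mutual covering lemma, by the second-moment method applied to
`Z = ∑ₖ ∑ₗ ρ(Xₖ, Yₗ)` for the likelihood ratio `ρ`. -/
theorem mutual_covering (hn1 : 0 < n1) (hn2 : 0 < n2) (hw : ∀ x y, 0 ≤ w x y)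
    (hpair : ∀ x y, w x y ≤ A * n1 * n2 * (μ1.p x * μ2.p y))
    (hrow : ∀ x, ∑ y, w x y ≤ A * n1 * μ1.p x) (hcol : ∀ y, ∑ x, w x y ≤ A * n2 * μ2.p y)
    (htot : ∑ x, ∑ y, w x y ≤ A) :
    ∑ x, ∑ y, w x y ≤ 4 * A *
      ((μ1.pi n1).prod (μ2.pi n2)).expect (fun σ => ind (∃ k l, 0 < w (σ.1 k) (σ.2 l))) := by
  set ψ := ∑ x, ∑ y, w x y
  set P := ((μ1.pi n1).prod (μ2.pi n2)).expect (fun σ => ind (∃ k l, 0 < w (σ.1 k) (σ.2 l)))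
  have hZ : ∀ σ : (Fin n1 → V1) × (Fin n2 → V2), ¬(∃ k l, 0 < w (σ.1 k) (σ.2 l)) →
      ∑ k, ∑ l, likelihoodRatio μ1 μ2 w (σ.1 k) (σ.2 l) = 0 := fun σ h => by
    simp only [not_exists, not_lt] at h
    simp [likelihoodRatio, le_antisymm (h _ _) (hw _ _)]
  have hcs := ((μ1.pi n1).prod (μ2.pi n2)).sq_expect_le_expect_ind_mul hZ
  rw [expect_sum_sum, expect_expect_likelihoodRatio μ1 μ2 hw hpair] at hcs
  have hψP : ψ * ψ ≤ (4 * A * P) * ψ := by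
    have := hcs.trans <| mul_le_mul_of_nonneg_left
      (expect_sum_sum_likelihoodRatio_sq_le μ1 μ2 hw hpair hrow hcol htot)
      (expect_nonneg _ fun σ => ind_nonneg _)
    have hN : (0 : ℝ) < n1 * n2 := by positivity
    nlinarith [pow_pos hN 2]
  have hψ : 0 ≤ ψ := Finset.sum_nonneg fun x _ => Finset.sum_nonneg fun y _ => hw x y
  rcases hψ.eq_or_lt with h | h
  · rw [← h]
    have : 0 ≤ P := expect_nonneg _ fun σ => ind_nonneg _
    nlinarith
  · exact le_of_mul_le_mul_right hψP h

end MutualCovering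

/-- Bound `(1 - φ) ^ J ≤ exp (-θ / c)`, then use the convexity of `exp` between `0` and
`-1 / c`. -/
lemma one_sub_pow_le {φ θ c : ℝ} {J : ℕ} (hφ1 : φ ≤ 1) (hθ0 : 0 ≤ θ) (hθ1 : θ ≤ 1)
    (hc : 0 < c) (h : θ ≤ J * φ * c) : (1 - φ) ^ J ≤ 1 - θ + c := by
  have hexp : Real.exp (-(1 / c)) ≤ c := by
    rw [Real.exp_neg, inv_le_comm₀ (Real.exp_pos _) hc, ← one_div]
    linarith [Real.add_one_le_exp (1 / c)]
  have hconv := convexOn_exp.2 (Set.mem_univ 0) (Set.mem_univ (-(1 / c)))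
    (sub_nonneg.2 hθ1) hθ0 (by ring)
  simp only [smul_eq_mul, mul_zero, zero_add, Real.exp_zero, mul_one] at hconv
  calc (1 - φ) ^ J ≤ Real.exp (-φ) ^ J :=
        pow_le_pow_left₀ (sub_nonneg.2 hφ1) (by linarith [Real.add_one_le_exp (-φ)]) J
    _ = Real.exp (-(J * φ)) := by rw [← Real.exp_nat_mul]; ring_nf
    _ ≤ Real.exp (θ * -(1 / c)) := by
        rw [Real.exp_le_exp, mul_neg, mul_one_div, neg_le_neg_iff, div_le_iff₀ hc]
        exact h
    _ ≤ 1 - θ + θ * c := hconv.trans (by nlinarith)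
    _ ≤ 1 - θ + c := by nlinarith

section Superposition

open FinPMF

/-- One cloud of a superposition codebook: a centre `v ∼ p₀` together with `N₁` satellites drawn
i.i.d. from `p₁ v` and `N₂` from `p₂ v`. -/
def FinPMF.cloud (p0 : FinPMF U0) (p1 : U0 → FinPMF U1) (p2 : U0 → FinPMF U2) (N1 N2 : ℕ) :
    FinPMF (U0 × (Fin N1 → U1) × (Fin N2 → U2)) :=
  p0.compProd fun v => ((p1 v).pi N1).prod ((p2 v).pi N2)

variable (p0 : FinPMF U0) (p1 : U0 → FinPMF U1) (p2 : U0 → FinPMF U2) {N1 N2 : ℕ}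
  {W : U0 → U1 → U2 → ℝ}

theorem superposition_covering (hN1 : 0 < N1) (hN2 : 0 < N2) (hW : ∀ v x y, 0 ≤ W v x y) {c : ℝ}
    (hpair : ∀ v x y, W v x y ≤ c * p0.p v * N1 * N2 * ((p1 v).p x * (p2 v).p y))
    (hrow : ∀ v x, ∑ y, W v x y ≤ c * p0.p v * N1 * (p1 v).p x)
    (hcol : ∀ v y, ∑ x, W v x y ≤ c * p0.p v * N2 * (p2 v).p y)
    (htot : ∀ v, ∑ x, ∑ y, W v x y ≤ c * p0.p v) :
    ∑ v, ∑ x, ∑ y, W v x y ≤ 4 * c *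
      (cloud p0 p1 p2 N1 N2).expect (fun b => ind (∃ k l, 0 < W b.1 (b.2.1 k) (b.2.2 l))) := by
  rw [cloud, expect_compProd, ← expect_const_mul]
  refine Finset.sum_le_sum fun v _ => ?_
  exact (mutual_covering (p1 v) (p2 v) hN1 hN2 (hW v) (hpair v) (hrow v) (hcol v) (htot v)).trans_eq
    (by ring)

theorem mul_expect_superposition_miss_le (hN1 : 0 < N1) (hN2 : 0 < N2) (J : ℕ)
    (hW : ∀ v x y, 0 ≤ W v x y) {Q t : ℝ} (hQ : 0 < Q) (ht : 0 < t)
    (hWQ : ∑ v, ∑ x, ∑ y, W v x y ≤ Q)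
    (hpair : ∀ v x y, W v x y ≤ Q * J * t * p0.p v * N1 * N2 * ((p1 v).p x * (p2 v).p y))
    (hrow : ∀ v x, ∑ y, W v x y ≤ Q * J * t * p0.p v * N1 * (p1 v).p x)
    (hcol : ∀ v y, ∑ x, W v x y ≤ Q * J * t * p0.p v * N2 * (p2 v).p y)
    (htot : ∀ v, ∑ x, ∑ y, W v x y ≤ Q * J * t * p0.p v) :
    Q * ((cloud p0 p1 p2 N1 N2).pi J).expect
        (fun ω => ind (∀ i, ¬∃ k l, 0 < W (ω i).1 ((ω i).2.1 k) ((ω i).2.2 l))) ≤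
      Q - ∑ v, ∑ x, ∑ y, W v x y + Q * (4 * t) := by
  rw [expect_pi_forall_not _
    fun b : U0 × (Fin N1 → U1) × (Fin N2 → U2) => ∃ k l, 0 < W b.1 (b.2.1 k) (b.2.2 l)]
  have hcov := superposition_covering p0 p1 p2 hN1 hN2 hW hpair hrow hcol htot
  set φ := (cloud p0 p1 p2 N1 N2).expect (fun b => ind (∃ k l, 0 < W b.1 (b.2.1 k) (b.2.2 l)))
  set ψ := ∑ v, ∑ x, ∑ y, W v x y
  have hψ : 0 ≤ ψ := Finset.sum_nonneg fun v _ => Finset.sum_nonneg fun x _ =>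
    Finset.sum_nonneg fun y _ => hW v x y
  have hmiss := one_sub_pow_le (θ := ψ / Q) (c := 4 * t) (J := J)
    (expect_ind_le_one _ _) (div_nonneg hψ hQ.le)
    ((div_le_one hQ).2 hWQ) (by positivity) (by rw [div_le_iff₀ hQ]; linarith)
  calc Q * (1 - φ) ^ J ≤ Q * (1 - ψ / Q + 4 * t) := mul_le_mul_of_nonneg_left hmiss hQ.le
    _ = Q - ψ + Q * (4 * t) := by field_simp

end Superposition

section Marginals

variable (qS : FinPMF S) (qU : S → FinPMF (U0 × U1 × U2))

lemma qMD_nonneg (s : S) (u0 : U0) (u1 : U1) (u2 : U2) : 0 ≤ qMD qS qU s u0 u1 u2 :=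
  mul_nonneg (qS.nonneg s) ((qU s).nonneg _)

lemma sum_qMD (s : S) : ∑ u0, ∑ u1, ∑ u2, qMD qS qU s u0 u1 u2 = qS.p s := by
  have h := (qU s).sum_eq_one
  simp only [Fintype.sum_prod_type] at h
  simp only [qMD, ← Finset.mul_sum, h, mul_one]

lemma mSU0_nonneg (s : S) (u0 : U0) : 0 ≤ mSU0 qS qU s u0 :=
  Finset.sum_nonneg fun _ _ => Finset.sum_nonneg fun _ _ => qMD_nonneg qS qU _ _ _ _

lemma mU0_nonneg (u0 : U0) : 0 ≤ mU0 qS qU u0 :=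
  Finset.sum_nonneg fun _ _ => mSU0_nonneg qS qU _ _

lemma mSU01_nonneg (s : S) (u0 : U0) (u1 : U1) : 0 ≤ mSU01 qS qU s u0 u1 :=
  Finset.sum_nonneg fun _ _ => qMD_nonneg qS qU _ _ _ _

lemma mSU02_nonneg (s : S) (u0 : U0) (u2 : U2) : 0 ≤ mSU02 qS qU s u0 u2 :=
  Finset.sum_nonneg fun _ _ => qMD_nonneg qS qU _ _ _ _

lemma mU01_nonneg (u0 : U0) (u1 : U1) : 0 ≤ mU01 qS qU u0 u1 :=
  Finset.sum_nonneg fun _ _ => mSU01_nonneg qS qU _ _ _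

lemma mU02_nonneg (u0 : U0) (u2 : U2) : 0 ≤ mU02 qS qU u0 u2 :=
  Finset.sum_nonneg fun _ _ => mSU02_nonneg qS qU _ _ _

lemma sum_mU0 : ∑ u0, mU0 qS qU u0 = 1 := by
  simp only [mU0, mSU0]
  rw [Finset.sum_comm]
  simp only [sum_qMD, qS.sum_eq_one]

lemma sum_mU01 (u0 : U0) : ∑ u1, mU01 qS qU u0 u1 = mU0 qS qU u0 := by
  simp only [mU01, mU0, mSU01, mSU0]
  exact Finset.sum_comm

lemma sum_mU02 (u0 : U0) : ∑ u2, mU02 qS qU u0 u2 = mU0 qS qU u0 := by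
  simp only [mU02, mU0, mSU02, mSU0]
  rw [Finset.sum_comm]
  exact Finset.sum_congr rfl fun s _ => Finset.sum_comm

variable {qS qU} {s : S} {u0 : U0} {u1 : U1} {u2 : U2}

lemma qMD_le_mSU01 : qMD qS qU s u0 u1 u2 ≤ mSU01 qS qU s u0 u1 :=
  Finset.single_le_sum (f := (qMD qS qU s u0 u1 ·)) (fun _ _ => qMD_nonneg qS qU _ _ _ _)
    (Finset.mem_univ u2)

lemma qMD_le_mSU02 : qMD qS qU s u0 u1 u2 ≤ mSU02 qS qU s u0 u2 :=
  Finset.single_le_sum (f := (qMD qS qU s u0 · u2)) (fun _ _ => qMD_nonneg qS qU _ _ _ _)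
    (Finset.mem_univ u1)

lemma qMD_le_mU012 : qMD qS qU s u0 u1 u2 ≤ mU012 qS qU u0 u1 u2 :=
  Finset.single_le_sum (f := (qMD qS qU · u0 u1 u2)) (fun _ _ => qMD_nonneg qS qU _ _ _ _)
    (Finset.mem_univ s)

lemma mSU01_le_mSU0 : mSU01 qS qU s u0 u1 ≤ mSU0 qS qU s u0 :=
  Finset.single_le_sum (f := (mSU01 qS qU s u0 ·)) (fun _ _ => mSU01_nonneg qS qU _ _ _)
    (Finset.mem_univ u1)

lemma mSU0_le_mU0 : mSU0 qS qU s u0 ≤ mU0 qS qU u0 :=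
  Finset.single_le_sum (f := (mSU0 qS qU · u0)) (fun _ _ => mSU0_nonneg qS qU _ _)
    (Finset.mem_univ s)

lemma mSU01_le_mU01 : mSU01 qS qU s u0 u1 ≤ mU01 qS qU u0 u1 :=
  Finset.single_le_sum (f := (mSU01 qS qU · u0 u1)) (fun _ _ => mSU01_nonneg qS qU _ _ _)
    (Finset.mem_univ s)

lemma mSU02_le_mU02 : mSU02 qS qU s u0 u2 ≤ mU02 qS qU u0 u2 :=
  Finset.single_le_sum (f := (mSU02 qS qU · u0 u2)) (fun _ _ => mSU02_nonneg qS qU _ _ _)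
    (Finset.mem_univ s)

lemma qS_pos_of_qMD_pos (h : 0 < qMD qS qU s u0 u1 u2) : 0 < qS.p s :=
  pos_of_mul_pos_left h ((qU s).nonneg _)

lemma mU0_pos_of_qMD_pos (h : 0 < qMD qS qU s u0 u1 u2) : 0 < mU0 qS qU u0 :=
  h.trans_le (qMD_le_mSU01.trans (mSU01_le_mSU0.trans mSU0_le_mU0))

end Marginals

section ConditionalLaws

variable (qS : FinPMF S) (qU : S → FinPMF (U0 × U1 × U2))

noncomputable def pmfU0 : FinPMF U0 := ⟨mU0 qS qU, mU0_nonneg qS qU, sum_mU0 qS qU⟩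

/-- The law of `U₁` given `U₀ = u₀`; arbitrary where `q(u₀) = 0`. -/
noncomputable def condU1 [Nonempty U1] (u0 : U0) : FinPMF U1 :=
  FinPMF.normalize (mU01 qS qU u0) (mU01_nonneg qS qU u0)

/-- The law of `U₂` given `U₀ = u₀`; arbitrary where `q(u₀) = 0`. -/
noncomputable def condU2 [Nonempty U2] (u0 : U0) : FinPMF U2 :=
  FinPMF.normalize (mU02 qS qU u0) (mU02_nonneg qS qU u0)

lemma mU0_mul_condU1 [Nonempty U1] (u0 : U0) (u1 : U1) :
    mU0 qS qU u0 * (condU1 qS qU u0).p u1 = mU01 qS qU u0 u1 := by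
  rw [← sum_mU01, condU1, FinPMF.sum_mul_normalize]

lemma mU0_mul_condU2 [Nonempty U2] (u0 : U0) (u2 : U2) :
    mU0 qS qU u0 * (condU2 qS qU u0).p u2 = mU02 qS qU u0 u2 := by
  rw [← sum_mU02, condU2, FinPMF.sum_mul_normalize]

end ConditionalLaws

section RateConditions

variable (qS : FinPMF S) (qU : S → FinPMF (U0 × U1 × U2))

/-- The four information-density conditions of the theorem at `(s, u₀, u₁, u₂)`, solved for the
pmf values; `t` stands for `2 ^ (-γ)`. -/
structure RateConditions (M1 M2 J0 : ℕ) (t : ℝ) (s : S) (u0 : U0) (u1 : U1) (u2 : U2) :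
    Prop where
  cloud : mSU0 qS qU s u0 ≤ qS.p s * mU0 qS qU u0 * (J0 * t)
  satellite1 : mSU01 qS qU s u0 u1 ≤ qS.p s * mU01 qS qU u0 u1 * (M1 * t)
  satellite2 : mSU02 qS qU s u0 u2 ≤ qS.p s * mU02 qS qU u0 u2 * (M2 * t)
  joint : qMD qS qU s u0 u1 u2 * mU0 qS qU u0 ≤
    qS.p s * (mU01 qS qU u0 u1 * mU02 qS qU u0 u2) * (M1 * M2 / J0 * t)

lemma le_mul_of_not_logb_sub_logb_lt {a b c γ : ℝ} (ha : 0 < a) (hb : 0 < b) (hc : 0 < c)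
    (h : ¬Real.logb 2 c - Real.logb 2 (a / b) < γ) : a ≤ b * (c * 2 ^ (-γ)) := by
  rw [← div_le_iff₀' hb, ← Real.logb_le_logb one_lt_two (div_pos ha hb) (by positivity),
    Real.logb_mul hc.ne' (by positivity), Real.logb_rpow two_pos (by norm_num)]
  linarith [not_lt.1 h]

variable {qS qU} {s : S} {u0 : U0} {u1 : U1} {u2 : U2}

lemma iSU012_add_iU1U2cU0 (hq : 0 < qMD qS qU s u0 u1 u2) :
    iSU012 qS qU s u0 u1 u2 + iU1U2cU0 qS qU u0 u1 u2 =
      Real.logb 2 (qMD qS qU s u0 u1 u2 * mU0 qS qU u0 /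
        (qS.p s * (mU01 qS qU u0 u1 * mU02 qS qU u0 u2))) := by
  have hS := qS_pos_of_qMD_pos hq
  have h0 := mU0_pos_of_qMD_pos hq
  have h1 := hq.trans_le (qMD_le_mSU01.trans mSU01_le_mU01)
  have h2 := hq.trans_le (qMD_le_mSU02.trans mSU02_le_mU02)
  have h012 := hq.trans_le qMD_le_mU012
  rw [iSU012, iU1U2cU0, ← Real.logb_mul (by positivity) (by positivity)]
  congr 1
  field_simp

end RateConditions

section Weights

variable (qS : FinPMF S) (qU : S → FinPMF (U0 × U1 × U2))

noncomputable def mdWeight (E : S → U0 → U1 → U2 → Prop) (s : S) (u0 : U0) (u1 : U1) (u2 : U2) :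
    ℝ :=
  qMD qS qU s u0 u1 u2 * ind (¬E s u0 u1 u2)

variable {qS qU} {E : S → U0 → U1 → U2 → Prop} {s : S}

lemma mdWeight_nonneg (u0 : U0) (u1 : U1) (u2 : U2) : 0 ≤ mdWeight qS qU E s u0 u1 u2 :=
  mul_nonneg (qMD_nonneg qS qU s u0 u1 u2) (ind_nonneg _)

lemma not_of_mdWeight_pos {u0 : U0} {u1 : U1} {u2 : U2} (h : 0 < mdWeight qS qU E s u0 u1 u2) :
    ¬E s u0 u1 u2 := by
  classical
  intro hE
  simp [mdWeight, ind_neg (not_not_intro hE)] at h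

lemma sub_sum_mdWeight :
    qS.p s - ∑ u0, ∑ u1, ∑ u2, mdWeight qS qU E s u0 u1 u2 =
      ∑ u0, ∑ u1, ∑ u2, qMD qS qU s u0 u1 u2 * ind (E s u0 u1 u2) := by
  simp only [← sum_qMD qS qU s, ← Finset.sum_sub_distrib, mdWeight, ind_not, mul_sub, mul_one,
    sub_sub_cancel]

lemma mdWeight_le_mul_ind {M1 M2 J0 : ℕ} {t : ℝ}
    (hE : ∀ u0 u1 u2, 0 < qMD qS qU s u0 u1 u2 → ¬E s u0 u1 u2 →
      RateConditions qS qU M1 M2 J0 t s u0 u1 u2) (u0 : U0) (u1 : U1) (u2 : U2) :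
    mdWeight qS qU E s u0 u1 u2 ≤
      qMD qS qU s u0 u1 u2 * ind (RateConditions qS qU M1 M2 J0 t s u0 u1 u2) := by
  rcases (qMD_nonneg qS qU s u0 u1 u2).eq_or_lt with h | h
  · simp [mdWeight, ← h]
  · exact mul_le_mul_of_nonneg_left (ind_mono (hE u0 u1 u2 h)) h.le

end Weights

section WeightBounds

variable {qS : FinPMF S} {qU : S → FinPMF (U0 × U1 × U2)} {J0 N1 N2 : ℕ} {t : ℝ} {s : S}
  {W : U0 → U1 → U2 → ℝ}

lemma sum_sum_weight_le_of_rateConditions (ht : 0 ≤ t)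
    (hW : ∀ v x y, W v x y ≤
      qMD qS qU s v x y * ind (RateConditions qS qU (J0 * N1) (J0 * N2) J0 t s v x y)) (v : U0) :
    ∑ x, ∑ y, W v x y ≤ qS.p s * J0 * t * mU0 qS qU v := by
  calc ∑ x, ∑ y, W v x y
      ≤ ∑ x, ∑ y, qMD qS qU s v x y * ind (mSU0 qS qU s v ≤ qS.p s * mU0 qS qU v * (J0 * t)) :=
        Finset.sum_le_sum fun x _ => Finset.sum_le_sum fun y _ => (hW v x y).trans <|
          mul_le_mul_of_nonneg_left (ind_mono RateConditions.cloud) (qMD_nonneg qS qU s v x y)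
    _ = mSU0 qS qU s v * ind (mSU0 qS qU s v ≤ qS.p s * mU0 qS qU v * (J0 * t)) := by
        simp only [mSU0, Finset.sum_mul]
    _ ≤ qS.p s * J0 * t * mU0 qS qU v := by
        refine (mul_ind_le ?_).trans_eq (by ring)
        exact mul_nonneg (mul_nonneg (qS.nonneg s) (mU0_nonneg qS qU v)) (by positivity)

lemma sum_weight_le_of_rateConditions_left [Nonempty U1] (ht : 0 ≤ t)
    (hW : ∀ v x y, W v x y ≤
      qMD qS qU s v x y * ind (RateConditions qS qU (J0 * N1) (J0 * N2) J0 t s v x y))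
    (v : U0) (x : U1) :
    ∑ y, W v x y ≤ qS.p s * J0 * t * mU0 qS qU v * N1 * (condU1 qS qU v).p x := by
  calc ∑ y, W v x y
      ≤ ∑ y, qMD qS qU s v x y *
          ind (mSU01 qS qU s v x ≤ qS.p s * mU01 qS qU v x * ((J0 * N1 : ℕ) * t)) :=
        Finset.sum_le_sum fun y _ => (hW v x y).trans <|
          mul_le_mul_of_nonneg_left (ind_mono RateConditions.satellite1) (qMD_nonneg qS qU s v x y)
    _ = mSU01 qS qU s v x *
          ind (mSU01 qS qU s v x ≤ qS.p s * mU01 qS qU v x * ((J0 * N1 : ℕ) * t)) := by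
        simp only [mSU01, Finset.sum_mul]
    _ ≤ qS.p s * mU01 qS qU v x * ((J0 * N1 : ℕ) * t) :=
        mul_ind_le (mul_nonneg (mul_nonneg (qS.nonneg s) (mU01_nonneg qS qU v x)) (by positivity))
    _ = _ := by rw [← mU0_mul_condU1]; push_cast; ring

lemma sum_weight_le_of_rateConditions_right [Nonempty U2] (ht : 0 ≤ t)
    (hW : ∀ v x y, W v x y ≤
      qMD qS qU s v x y * ind (RateConditions qS qU (J0 * N1) (J0 * N2) J0 t s v x y))
    (v : U0) (y : U2) :
    ∑ x, W v x y ≤ qS.p s * J0 * t * mU0 qS qU v * N2 * (condU2 qS qU v).p y := by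
  calc ∑ x, W v x y
      ≤ ∑ x, qMD qS qU s v x y *
          ind (mSU02 qS qU s v y ≤ qS.p s * mU02 qS qU v y * ((J0 * N2 : ℕ) * t)) :=
        Finset.sum_le_sum fun x _ => (hW v x y).trans <|
          mul_le_mul_of_nonneg_left (ind_mono RateConditions.satellite2) (qMD_nonneg qS qU s v x y)
    _ = mSU02 qS qU s v y *
          ind (mSU02 qS qU s v y ≤ qS.p s * mU02 qS qU v y * ((J0 * N2 : ℕ) * t)) := by
        simp only [mSU02, Finset.sum_mul]
    _ ≤ qS.p s * mU02 qS qU v y * ((J0 * N2 : ℕ) * t) :=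
        mul_ind_le (mul_nonneg (mul_nonneg (qS.nonneg s) (mU02_nonneg qS qU v y)) (by positivity))
    _ = _ := by rw [← mU0_mul_condU2]; push_cast; ring

lemma weight_le_of_rateConditions [Nonempty U1] [Nonempty U2] (ht : 0 ≤ t)
    (hW : ∀ v x y, W v x y ≤
      qMD qS qU s v x y * ind (RateConditions qS qU (J0 * N1) (J0 * N2) J0 t s v x y))
    (v : U0) (x : U1) (y : U2) :
    W v x y ≤ qS.p s * J0 * t * mU0 qS qU v * N1 * N2 *
      ((condU1 qS qU v).p x * (condU2 qS qU v).p y) := by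
  set X := qS.p s * (mU01 qS qU v x * mU02 qS qU v y) *
    (((J0 * N1 : ℕ) : ℝ) * (J0 * N2 : ℕ) / J0 * t)
  rcases (mU0_nonneg qS qU v).eq_or_lt with h0 | h0
  · have hq : qMD qS qU s v x y = 0 := by
      by_contra hq
      exact (mU0_pos_of_qMD_pos ((qMD_nonneg qS qU s v x y).lt_of_ne' hq)).ne' h0.symm
    simpa [← h0, hq] using hW v x y
  rw [← mul_le_mul_iff_of_pos_right h0]
  calc W v x y * mU0 qS qU v
      ≤ qMD qS qU s v x y * mU0 qS qU v * ind (qMD qS qU s v x y * mU0 qS qU v ≤ X) := by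
        rw [mul_right_comm]
        exact mul_le_mul_of_nonneg_right ((hW v x y).trans <| mul_le_mul_of_nonneg_left
          (ind_mono RateConditions.joint) (qMD_nonneg qS qU s v x y)) h0.le
    _ ≤ X := mul_ind_le (mul_nonneg (mul_nonneg (qS.nonneg s) (mul_nonneg (mU01_nonneg qS qU v x)
        (mU02_nonneg qS qU v y))) (by positivity))
    _ = _ := by
        simp only [X, ← mU0_mul_condU1 qS qU v x, ← mU0_mul_condU2 qS qU v y]
        rcases eq_or_ne (J0 : ℝ) 0 with hJ | hJ
        · simp [hJ]
        · push_cast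
          field_simp

end WeightBounds

section RandomCoding

open FinPMF

variable (qS : FinPMF S) (qU : S → FinPMF (U0 × U1 × U2))

noncomputable def randomCodebook [Nonempty U1] [Nonempty U2] (J0 N1 N2 : ℕ) :
    FinPMF (Fin J0 → U0 × (Fin N1 → U1) × (Fin N2 → U2)) :=
  ((pmfU0 qS qU).cloud (condU1 qS qU) (condU2 qS qU) N1 N2).pi J0

variable {qS qU} [Nonempty U1] [Nonempty U2] {J0 N1 N2 : ℕ} {t : ℝ}
  {E : S → U0 → U1 → U2 → Prop}

theorem mul_expect_randomCodebook_miss_le (hN1 : 0 < N1) (hN2 : 0 < N2) (ht : 0 < t)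
    (hE : ∀ s u0 u1 u2, 0 < qMD qS qU s u0 u1 u2 → ¬E s u0 u1 u2 →
      RateConditions qS qU (J0 * N1) (J0 * N2) J0 t s u0 u1 u2) (s : S) :
    qS.p s * (randomCodebook qS qU J0 N1 N2).expect
        (fun ω => ind (∀ i, ¬∃ k l, 0 < mdWeight qS qU E s (ω i).1 ((ω i).2.1 k) ((ω i).2.2 l))) ≤
      ∑ u0, ∑ u1, ∑ u2, qMD qS qU s u0 u1 u2 * ind (E s u0 u1 u2) + qS.p s * (4 * t) := by
  rcases (qS.nonneg s).eq_or_lt with hS | hS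
  · rw [← hS, zero_mul, zero_mul, add_zero]
    exact Finset.sum_nonneg fun u0 _ => Finset.sum_nonneg fun u1 _ => Finset.sum_nonneg
      fun u2 _ => mul_nonneg (qMD_nonneg qS qU s u0 u1 u2) (ind_nonneg _)
  have hW := mdWeight_le_mul_ind (hE s)
  have hWS : ∑ u0, ∑ u1, ∑ u2, mdWeight qS qU E s u0 u1 u2 ≤ qS.p s := by
    rw [← sub_nonneg, sub_sum_mdWeight]
    exact Finset.sum_nonneg fun u0 _ => Finset.sum_nonneg fun u1 _ => Finset.sum_nonneg
      fun u2 _ => mul_nonneg (qMD_nonneg qS qU s u0 u1 u2) (ind_nonneg _)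
  have := mul_expect_superposition_miss_le (pmfU0 qS qU) (condU1 qS qU) (condU2 qS qU) hN1 hN2 J0
    mdWeight_nonneg hS ht hWS (weight_le_of_rateConditions ht.le hW)
    (sum_weight_le_of_rateConditions_left ht.le hW) (sum_weight_le_of_rateConditions_right ht.le hW)
    (sum_sum_weight_le_of_rateConditions ht.le hW)
  rwa [sub_sum_mdWeight] at this

theorem expect_randomCodebook_miss_le (hN1 : 0 < N1) (hN2 : 0 < N2) (ht : 0 < t)
    (hE : ∀ s u0 u1 u2, 0 < qMD qS qU s u0 u1 u2 → ¬E s u0 u1 u2 →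
      RateConditions qS qU (J0 * N1) (J0 * N2) J0 t s u0 u1 u2) :
    (randomCodebook qS qU J0 N1 N2).expect (fun ω => ∑ s, qS.p s *
        ind (∀ i, ¬∃ k l, 0 < mdWeight qS qU E s (ω i).1 ((ω i).2.1 k) ((ω i).2.2 l))) ≤
      ∑ s, ∑ u0, ∑ u1, ∑ u2, qMD qS qU s u0 u1 u2 * ind (E s u0 u1 u2) + 4 * t := by
  rw [expect_sum, ← one_mul (4 * t), ← qS.sum_eq_one, Finset.sum_mul, ← Finset.sum_add_distrib]
  refine Finset.sum_le_sum fun s _ => ?_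
  rw [expect_const_mul]
  exact mul_expect_randomCodebook_miss_le hN1 hN2 ht hE s

end RandomCoding

lemma pExcessMD_dirac {M1 M2 : ℕ} (qS : FinPMF S) (d0 : S → R0 → ℝ) (d1 : S → R1 → ℝ)
    (d2 : S → R2 → ℝ) (D0 D1 D2 : ℝ) (f : S → Fin M1 × Fin M2) (h0 : Fin M1 × Fin M2 → R0)
    (h1 : Fin M1 → R1) (h2 : Fin M2 → R2) :
    pExcessMD M1 M2 qS d0 d1 d2 D0 D1 D2 (fun s => FinPMF.dirac (f s))
        (fun m => FinPMF.dirac (h0 m)) (fun m => FinPMF.dirac (h1 m))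
        (fun m => FinPMF.dirac (h2 m)) =
      ∑ s, qS.p s *
        ind (D0 < d0 s (h0 (f s)) ∨ D1 < d1 s (h1 (f s).1) ∨ D2 < d2 s (h2 (f s).2)) := by
  classical
  simp [pExcessMD, FinPMF.dirac, Finset.sum_ite_eq']

section SuperpositionCode

variable {J N1 N2 : ℕ} (ω : Fin J → U0 × (Fin N1 → U1) × (Fin N2 → U2))

def decode1 (g1 : U0 → U1 → R1) (m : Fin (J * N1)) : R1 :=
  let τ := finProdFinEquiv.symm m
  g1 (ω τ.1).1 ((ω τ.1).2.1 τ.2)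

def decode2 (g2 : U0 → U2 → R2) (m : Fin (J * N2)) : R2 :=
  let τ := finProdFinEquiv.symm m
  g2 (ω τ.1).1 ((ω τ.1).2.2 τ.2)

def decode0 (g0 : U0 → U1 → U2 → R0) (m : Fin (J * N1) × Fin (J * N2)) : R0 :=
  let τ1 := finProdFinEquiv.symm m.1
  let τ2 := finProdFinEquiv.symm m.2
  g0 (ω τ1.1).1 ((ω τ1.1).2.1 τ1.2) ((ω τ2.1).2.2 τ2.2)

/-- Send the indices of a codeword triple `(i, k, l)` of positive weight `W s`, if there is one;
the cloud index `i` goes into both descriptions. -/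
noncomputable def encode [Nonempty (Fin J × Fin N1 × Fin N2)] (W : S → U0 → U1 → U2 → ℝ)
    (s : S) : Fin (J * N1) × Fin (J * N2) :=
  let τ := Classical.epsilon fun τ : Fin J × Fin N1 × Fin N2 =>
    0 < W s (ω τ.1).1 ((ω τ.1).2.1 τ.2.1) ((ω τ.1).2.2 τ.2.2)
  (finProdFinEquiv (τ.1, τ.2.1), finProdFinEquiv (τ.1, τ.2.2))

omit [Fintype U0] [Fintype U1] [Fintype U2] in
theorem pExcessMD_superpositionCode_le [Nonempty (Fin J × Fin N1 × Fin N2)] (qS : FinPMF S)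
    (d0 : S → R0 → ℝ) (d1 : S → R1 → ℝ) (d2 : S → R2 → ℝ) (D0 D1 D2 : ℝ)
    (g0 : U0 → U1 → U2 → R0) (g1 : U0 → U1 → R1) (g2 : U0 → U2 → R2)
    {W : S → U0 → U1 → U2 → ℝ} (hW : ∀ s u0 u1 u2, 0 < W s u0 u1 u2 →
      ¬(D0 < d0 s (g0 u0 u1 u2) ∨ D1 < d1 s (g1 u0 u1) ∨ D2 < d2 s (g2 u0 u2))) :
    pExcessMD (J * N1) (J * N2) qS d0 d1 d2 D0 D1 D2 (fun s => FinPMF.dirac (encode ω W s))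
        (fun m => FinPMF.dirac (decode0 ω g0 m)) (fun m => FinPMF.dirac (decode1 ω g1 m))
        (fun m => FinPMF.dirac (decode2 ω g2 m)) ≤
      ∑ s, qS.p s * ind (∀ i, ¬∃ k l, 0 < W s (ω i).1 ((ω i).2.1 k) ((ω i).2.2 l)) := by
  rw [pExcessMD_dirac]
  refine Finset.sum_le_sum fun s _ => mul_le_mul_of_nonneg_left (ind_mono ?_) (qS.nonneg s)
  intro herr
  by_contra hcov
  simp only [not_forall, not_not] at hcov
  obtain ⟨i, k, l, hpos⟩ := hcov
  have := hW s _ _ _ (Classical.epsilon_spec (p := fun τ : Fin J × Fin N1 × Fin N2 =>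
    0 < W s (ω τ.1).1 ((ω τ.1).2.1 τ.2.1) ((ω τ.1).2.2 τ.2.2)) ⟨(i, k, l), hpos⟩)
  simp only [encode, decode0, decode1, decode2, Equiv.symm_apply_apply] at herr
  exact this herr

end SuperpositionCode

/-- The event of the theorem. -/
def mdError (qS : FinPMF S) (qU : S → FinPMF (U0 × U1 × U2))
    (d0 : S → R0 → ℝ) (d1 : S → R1 → ℝ) (d2 : S → R2 → ℝ) (D0 D1 D2 : ℝ)
    (g0 : U0 → U1 → U2 → R0) (g1 : U0 → U1 → R1) (g2 : U0 → U2 → R2) (M1 M2 J0 : ℕ) (γ : ℝ)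
    (s : S) (u0 : U0) (u1 : U1) (u2 : U2) : Prop :=
  D0 < d0 s (g0 u0 u1 u2) ∨ D1 < d1 s (g1 u0 u1) ∨ D2 < d2 s (g2 u0 u2) ∨
    Real.logb 2 (J0 : ℝ) - iSU0 qS qU s u0 < γ ∨
    Real.logb 2 (M1 : ℝ) - iSU01 qS qU s u0 u1 < γ ∨
    Real.logb 2 (M2 : ℝ) - iSU02 qS qU s u0 u2 < γ ∨
    Real.logb 2 ((M1 : ℝ) * (M2 : ℝ) / (J0 : ℝ)) -
      iSU012 qS qU s u0 u1 u2 - iU1U2cU0 qS qU u0 u1 u2 < γ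

omit [Fintype R0] [Fintype R1] [Fintype R2] in
lemma rateConditions_of_not_mdError {qS : FinPMF S} {qU : S → FinPMF (U0 × U1 × U2)}
    {d0 : S → R0 → ℝ} {d1 : S → R1 → ℝ} {d2 : S → R2 → ℝ} {D0 D1 D2 : ℝ}
    {g0 : U0 → U1 → U2 → R0} {g1 : U0 → U1 → R1} {g2 : U0 → U2 → R2} {M1 M2 J0 : ℕ} {γ : ℝ}
    {s : S} {u0 : U0} {u1 : U1} {u2 : U2} (hM1 : 0 < M1) (hM2 : 0 < M2) (hJ0 : 0 < J0)
    (hq : 0 < qMD qS qU s u0 u1 u2)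
    (h : ¬mdError qS qU d0 d1 d2 D0 D1 D2 g0 g1 g2 M1 M2 J0 γ s u0 u1 u2) :
    RateConditions qS qU M1 M2 J0 (2 ^ (-γ)) s u0 u1 u2 := by
  obtain ⟨-, -, -, hcloud, hsat1, hsat2, hjoint⟩ := by simpa only [mdError, not_or] using h
  have hS := qS_pos_of_qMD_pos hq
  have hs1 := hq.trans_le qMD_le_mSU01
  have hs2 := hq.trans_le qMD_le_mSU02
  refine ⟨?_, ?_, ?_, ?_⟩
  · exact le_mul_of_not_logb_sub_logb_lt (hs1.trans_le mSU01_le_mSU0)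
      (mul_pos hS (mU0_pos_of_qMD_pos hq)) (by exact_mod_cast hJ0) hcloud
  · exact le_mul_of_not_logb_sub_logb_lt hs1 (mul_pos hS (hs1.trans_le mSU01_le_mU01))
      (by exact_mod_cast hM1) hsat1
  · exact le_mul_of_not_logb_sub_logb_lt hs2 (mul_pos hS (hs2.trans_le mSU02_le_mU02))
      (by exact_mod_cast hM2) hsat2
  · rw [sub_sub, iSU012_add_iU1U2cU0 hq] at hjoint
    exact le_mul_of_not_logb_sub_logb_lt (mul_pos hq (mU0_pos_of_qMD_pos hq))
      (mul_pos hS (mul_pos (hs1.trans_le mSU01_le_mU01) (hs2.trans_le mSU02_le_mU02)))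
      (by positivity) hjoint

theorem oneShot_multiple_description_loosened_general (qS : FinPMF S)
    (qU : S → FinPMF (U0 × U1 × U2))
    (d0 : S → R0 → ℝ) (d1 : S → R1 → ℝ) (d2 : S → R2 → ℝ)
    (D0 D1 D2 : ℝ)
    (g0 : U0 → U1 → U2 → R0) (g1 : U0 → U1 → R1) (g2 : U0 → U2 → R2)
    (M1 M2 J0 : ℕ) (hM1 : 0 < M1) (hM2 : 0 < M2)
    (hJ01 : J0 ∣ M1) (hJ02 : J0 ∣ M2) (γ : ℝ) :
    ∃ (enc : S → FinPMF (Fin M1 × Fin M2)) (dec0 : Fin M1 × Fin M2 → FinPMF R0)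
      (dec1 : Fin M1 → FinPMF R1) (dec2 : Fin M2 → FinPMF R2),
      pExcessMD M1 M2 qS d0 d1 d2 D0 D1 D2 enc dec0 dec1 dec2 ≤
        (∑ s : S, ∑ u0 : U0, ∑ u1 : U1, ∑ u2 : U2,
          qMD qS qU s u0 u1 u2 *
          ind (D0 < d0 s (g0 u0 u1 u2) ∨ D1 < d1 s (g1 u0 u1) ∨
               D2 < d2 s (g2 u0 u2) ∨
               Real.logb 2 (J0 : ℝ) - iSU0 qS qU s u0 < γ ∨
               Real.logb 2 (M1 : ℝ) - iSU01 qS qU s u0 u1 < γ ∨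
               Real.logb 2 (M2 : ℝ) - iSU02 qS qU s u0 u2 < γ ∨
               Real.logb 2 ((M1 : ℝ) * (M2 : ℝ) / (J0 : ℝ)) -
                 iSU012 qS qU s u0 u1 u2 - iU1U2cU0 qS qU u0 u1 u2 < γ))
        + 4 * (2 : ℝ) ^ (-γ) := by
  have hJ0 : 0 < J0 := Nat.pos_of_dvd_of_pos hJ01 hM1
  obtain ⟨N1, rfl⟩ := hJ01
  obtain ⟨N2, rfl⟩ := hJ02
  obtain ⟨s⟩ := qS.nonempty
  obtain ⟨⟨-, u1, u2⟩⟩ := (qU s).nonempty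
  have : Nonempty U1 := ⟨u1⟩
  have : Nonempty U2 := ⟨u2⟩
  have : Nonempty (Fin J0 × Fin N1 × Fin N2) :=
    ⟨(⟨0, hJ0⟩, ⟨0, Nat.pos_of_mul_pos_left hM1⟩, ⟨0, Nat.pos_of_mul_pos_left hM2⟩)⟩
  let W := mdWeight qS qU (mdError qS qU d0 d1 d2 D0 D1 D2 g0 g1 g2 (J0 * N1) (J0 * N2) J0 γ)
  obtain ⟨ω, hω⟩ := (randomCodebook qS qU J0 N1 N2).exists_le_expect fun ω => ∑ s, qS.p s *
    ind (∀ i, ¬∃ k l, 0 < W s (ω i).1 ((ω i).2.1 k) ((ω i).2.2 l))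
  refine ⟨fun s => FinPMF.dirac (encode ω W s), fun m => FinPMF.dirac (decode0 ω g0 m),
    fun m => FinPMF.dirac (decode1 ω g1 m), fun m => FinPMF.dirac (decode2 ω g2 m), ?_⟩
  have hcode := pExcessMD_superpositionCode_le ω qS d0 d1 d2 D0 D1 D2 g0 g1 g2 (W := W)
    fun s u0 u1 u2 h hd => not_of_mdWeight_pos h (hd.imp_right (Or.imp_right Or.inl))
  have hmiss := expect_randomCodebook_miss_le (qS := qS) (qU := qU) (J0 := J0)
    (E := mdError qS qU d0 d1 d2 D0 D1 D2 g0 g1 g2 (J0 * N1) (J0 * N2) J0 γ)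
    (Nat.pos_of_mul_pos_left hM1) (Nat.pos_of_mul_pos_left hM2)
    (Real.rpow_pos_of_pos two_pos (-γ))
    fun s u0 u1 u2 hq hE => rateConditions_of_not_mdError hM1 hM2 hJ0 hq hE
  exact hcode.trans (hω.trans hmiss)

/-- Loosened one-shot multiple description bound. -/
theorem oneShot_multiple_description_loosened (qS : FinPMF S)
    (qU : S → FinPMF (U0 × U1 × U2))
    (d0 : S → R0 → ℝ) (d1 : S → R1 → ℝ) (d2 : S → R2 → ℝ)
    (hd0 : ∀ s r, 0 ≤ d0 s r) (hd1 : ∀ s r, 0 ≤ d1 s r) (hd2 : ∀ s r, 0 ≤ d2 s r)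
    (D0 D1 D2 : ℝ) (hD0 : 0 ≤ D0) (hD1 : 0 ≤ D1) (hD2 : 0 ≤ D2)
    (g0 : U0 → U1 → U2 → R0) (g1 : U0 → U1 → R1) (g2 : U0 → U2 → R2)
    (M1 M2 J0 : ℕ) (hM1 : 0 < M1) (hM2 : 0 < M2) (hJ0 : 0 < J0)
    (hJ01 : J0 ∣ M1) (hJ02 : J0 ∣ M2) (γ : ℝ) (hγ : 0 < γ) :
    ∃ (enc : S → FinPMF (Fin M1 × Fin M2)) (dec0 : Fin M1 × Fin M2 → FinPMF R0)
      (dec1 : Fin M1 → FinPMF R1) (dec2 : Fin M2 → FinPMF R2),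
      pExcessMD M1 M2 qS d0 d1 d2 D0 D1 D2 enc dec0 dec1 dec2 ≤
        (∑ s : S, ∑ u0 : U0, ∑ u1 : U1, ∑ u2 : U2,
          qMD qS qU s u0 u1 u2 *
          ind (D0 < d0 s (g0 u0 u1 u2) ∨ D1 < d1 s (g1 u0 u1) ∨
               D2 < d2 s (g2 u0 u2) ∨
               Real.logb 2 (J0 : ℝ) - iSU0 qS qU s u0 < γ ∨
               Real.logb 2 (M1 : ℝ) - iSU01 qS qU s u0 u1 < γ ∨
               Real.logb 2 (M2 : ℝ) - iSU02 qS qU s u0 u2 < γ ∨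
               Real.logb 2 ((M1 : ℝ) * (M2 : ℝ) / (J0 : ℝ)) -
                 iSU012 qS qU s u0 u1 u2 - iU1U2cU0 qS qU u0 u1 u2 < γ))
        + 4 * (2 : ℝ) ^ (-γ) :=
  oneShot_multiple_description_loosened_general qS qU d0 d1 d2 D0 D1 D2 g0 g1 g2 M1 M2 J0 hM1 hM2
    hJ01 hJ02 γ
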